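/- arXiv:0903.2675 — 9 statements merged into one kernel-verified Lean document; each statement's English description precedes it below -/
import Mathlib

section
/- For all integers 0 ≤ r ≤ n and prime power q ≥ 2, the Gaussian binomial coefficient satisfies [n choose r]_q < q^{r(n-r)} / K_q, where K_q = ∏_{j=1}^∞ (1 - q^{-j}). -/
/-!
Bound each factor `(qⁿ - qⁱ)/(qʳ - qⁱ)` by `qⁿ⁻ʳ / (1 - q^{-(r-i)})`; the product of these bounds is
`q^{r(n-r)} / ∏_{j=1}^{r} (1 - q^{-j})`. Taking logarithms, the infinite product `K_q` converges to
a positive number, and it is strictly smaller than every partial product because all its factors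
lie in `(0, 1)`.
-/

/-- The Gaussian binomial coefficient `[n choose r]_q = ∏_{i=0}^{r-1} (q^n - q^i)/(q^r - q^i)`. -/
noncomputable def gaussBinom (q n r : ℕ) : ℝ :=
  ∏ i ∈ Finset.range r, (((q : ℝ) ^ n - (q : ℝ) ^ i) / ((q : ℝ) ^ r - (q : ℝ) ^ i))

/-- `K_q = ∏_{j=1}^∞ (1 - q^{-j})`. -/
noncomputable def Kq (q : ℕ) : ℝ := ∏' j : ℕ, (1 - ((q : ℝ))⁻¹ ^ (j + 1))

open Finset Real

section OneSubPow

variable {x : ℝ}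

lemma one_sub_pow_succ_pos (hx : |x| < 1) (j : ℕ) : 0 < 1 - x ^ (j + 1) := by
  have : |x| ^ (j + 1) < 1 := pow_lt_one₀ (abs_nonneg x) hx j.succ_ne_zero
  linarith [le_abs_self (x ^ (j + 1)), abs_pow x (j + 1)]

lemma summable_log_one_sub_pow_succ (hx : |x| < 1) :
    Summable fun j : ℕ ↦ log (1 - x ^ (j + 1)) := by
  have hgeo : Summable fun j : ℕ ↦ -x ^ (j + 1) :=
    ((summable_nat_add_iff 1).2 (summable_geometric_of_abs_lt_one hx)).neg
  simpa [sub_eq_add_neg] using Real.summable_log_one_add_of_summable hgeo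

lemma tprod_one_sub_pow_succ_eq_exp (hx : |x| < 1) :
    ∏' j : ℕ, (1 - x ^ (j + 1)) = exp (∑' j : ℕ, log (1 - x ^ (j + 1))) :=
  (rexp_tsum_eq_tprod (one_sub_pow_succ_pos hx) (summable_log_one_sub_pow_succ hx)).symm

lemma tprod_one_sub_pow_succ_pos (hx : |x| < 1) : 0 < ∏' j : ℕ, (1 - x ^ (j + 1)) :=
  tprod_one_sub_pow_succ_eq_exp hx ▸ exp_pos _

lemma tprod_one_sub_pow_succ_lt_prod_range (hx₀ : 0 < x) (hx₁ : x < 1) (m : ℕ) :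
    ∏' j : ℕ, (1 - x ^ (j + 1)) < ∏ j ∈ range m, (1 - x ^ (j + 1)) := by
  have hx : |x| < 1 := by rwa [abs_of_pos hx₀]
  have hsum := summable_log_one_sub_pow_succ hx
  have htail : ∑' j : ℕ, log (1 - x ^ (j + m + 1)) < 0 := by
    have hneg : ∀ j : ℕ, log (1 - x ^ (j + m + 1)) < 0 := fun j ↦
      log_neg (one_sub_pow_succ_pos hx _) (by linarith [pow_pos hx₀ (j + m + 1)])
    simpa using ((summable_nat_add_iff m).2 hsum).tsum_lt_tsum (fun j ↦ (hneg j).le) (hneg 0)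
      summable_zero
  rw [tprod_one_sub_pow_succ_eq_exp hx, ← hsum.sum_add_tsum_nat_add m, exp_add, exp_sum]
  simp_rw [exp_log (one_sub_pow_succ_pos hx _)]
  exact mul_lt_of_lt_one_right (prod_pos fun j _ ↦ one_sub_pow_succ_pos hx j)
    (exp_lt_one_iff.2 htail)

end OneSubPow

lemma pow_sub_pow_div_pow_sub_pow_le {x : ℝ} (hx : 1 < x) {n r i : ℕ} (hrn : r ≤ n) (hir : i < r) :
    (x ^ n - x ^ i) / (x ^ r - x ^ i) ≤ x ^ (n - r) / (1 - x⁻¹ ^ (r - i)) := by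
  have hx₀ : x ≠ 0 := by positivity
  have hden : x ^ r - x ^ i = x ^ r * (1 - x⁻¹ ^ (r - i)) := by
    rw [inv_pow, pow_sub₀ x hx₀ hir.le]; field_simp
  calc (x ^ n - x ^ i) / (x ^ r - x ^ i) ≤ x ^ n / (x ^ r - x ^ i) :=
        div_le_div_of_nonneg_right (by linarith [pow_pos (by linarith : 0 < x) i])
          (sub_pos.2 (pow_lt_pow_right₀ hx hir)).le
    _ = x ^ (n - r) / (1 - x⁻¹ ^ (r - i)) := by
      rw [hden, ← Nat.add_sub_cancel' hrn, pow_add, Nat.add_sub_cancel_left,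
        mul_div_mul_left _ _ (pow_ne_zero _ hx₀)]

lemma gaussBinom_le_pow_div_prod_range {q n r : ℕ} (hq : 1 < q) (hr : r ≤ n) :
    gaussBinom q n r ≤ (q : ℝ) ^ (r * (n - r)) / ∏ j ∈ range r, (1 - (q : ℝ)⁻¹ ^ (j + 1)) := by
  have hx : (1 : ℝ) < q := by exact_mod_cast hq
  have hfactor_nonneg : ∀ i ∈ range r,
      0 ≤ ((q : ℝ) ^ n - (q : ℝ) ^ i) / ((q : ℝ) ^ r - (q : ℝ) ^ i) := fun i hi ↦ by
    have hir := mem_range.1 hi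
    exact div_nonneg (sub_nonneg.2 (pow_le_pow_right₀ hx.le (hir.le.trans hr)))
      (sub_nonneg.2 (pow_le_pow_right₀ hx.le hir.le))
  calc gaussBinom q n r ≤ ∏ i ∈ range r, (q : ℝ) ^ (n - r) / (1 - (q : ℝ)⁻¹ ^ (r - i)) :=
        prod_le_prod hfactor_nonneg fun i hi ↦ pow_sub_pow_div_pow_sub_pow_le hx hr (mem_range.1 hi)
    _ = _ := by
      rw [prod_div_distrib, prod_const, card_range, ← pow_mul',
        ← prod_range_reflect (fun j ↦ 1 - (q : ℝ)⁻¹ ^ (j + 1)) r]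
      congr 1
      refine prod_congr rfl fun i hi ↦ ?_
      rw [show r - 1 - i + 1 = r - i by have := mem_range.1 hi; omega]

theorem gaussBinom_upper_bound_general (q n r : ℕ) (hr : r ≤ n)
    (hq : 2 ≤ q) :
    gaussBinom q n r < (q : ℝ) ^ (r * (n - r)) / Kq q := by
  have hq₁ : (1 : ℝ) < q := by exact_mod_cast hq
  have hx₀ : 0 < (q : ℝ)⁻¹ := by positivity
  have hx₁ : (q : ℝ)⁻¹ < 1 := inv_lt_one_of_one_lt₀ hq₁
  calc gaussBinom q n r
      ≤ (q : ℝ) ^ (r * (n - r)) / ∏ j ∈ range r, (1 - (q : ℝ)⁻¹ ^ (j + 1)) :=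
        gaussBinom_le_pow_div_prod_range hq hr
    _ < (q : ℝ) ^ (r * (n - r)) / Kq q :=
        div_lt_div_of_pos_left (by positivity)
          (tprod_one_sub_pow_succ_pos (by rwa [abs_of_pos hx₀]))
          (tprod_one_sub_pow_succ_lt_prod_range hx₀ hx₁ r)

theorem gaussBinom_upper_bound (q n r : ℕ) (hr : r ≤ n)
    (hpp : ∃ p k : ℕ, p.Prime ∧ 0 < k ∧ q = p ^ k) (hq : 2 ≤ q) :
    gaussBinom q n r < (q : ℝ) ^ (r * (n - r)) / Kq q :=
  gaussBinom_upper_bound_general q n r hr hq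
end

section
/- The injection distance d_I(U,V) = dim(U+V) - min(dim U, dim V) defines a metric on the set of all subspaces of a finite-dimensional vector space over a field. -/
/-! The only non-trivial axiom is the triangle inequality. By the modular law
`dim (U ⊔ V) + dim (V ⊔ T) = dim ((U ⊔ V) ⊔ (V ⊔ T)) + dim ((U ⊔ V) ⊓ (V ⊔ T))`,
and the right-hand side dominates `dim (U ⊔ T) + dim V`; the `min` terms are then
absorbed by the arithmetic inequality `min u v + min v t ≤ v + min u t`. -/

/-- The injection distance `d_I(U,V) = dim(U+V) - min(dim U, dim V)`. -/
noncomputable def dI {F W : Type*} [Field F] [AddCommGroup W] [Module F W]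
    (U V : Submodule F W) : ℕ :=
  Module.finrank F ↥(U ⊔ V) - min (Module.finrank F ↥U) (Module.finrank F ↥V)

open Module

theorem Nat.min_add_min_le_add_min (u v t : ℕ) : min u v + min v t ≤ v + min u t := by
  omega

namespace Submodule

variable {F W : Type*} [Field F] [AddCommGroup W] [Module F W] [FiniteDimensional F W]

theorem finrank_sup_add_finrank_le_finrank_sup_add_finrank_sup (U V T : Submodule F W) :
    finrank F ↥(U ⊔ T) + finrank F V ≤ finrank F ↥(U ⊔ V) + finrank F ↥(V ⊔ T) :=
  calc finrank F ↥(U ⊔ T) + finrank F V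
      ≤ finrank F ↥((U ⊔ V) ⊔ (V ⊔ T)) + finrank F ↥((U ⊔ V) ⊓ (V ⊔ T)) := by
        gcongr
        · exact finrank_mono (sup_le_sup le_sup_left le_sup_right)
        · exact finrank_mono (le_inf le_sup_right le_sup_left)
    _ = finrank F ↥(U ⊔ V) + finrank F ↥(V ⊔ T) := finrank_sup_add_finrank_inf_eq _ _

end Submodule

section InjectionDistance

variable {F W : Type*} [Field F] [AddCommGroup W] [Module F W]

theorem dI_comm (U V : Submodule F W) : dI U V = dI V U := by
  rw [dI, dI, sup_comm, min_comm]

variable [FiniteDimensional F W]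

theorem dI_eq_zero_iff {U V : Submodule F W} : dI U V = 0 ↔ U = V := by
  constructor
  · intro h
    have hUV : finrank F ↥(U ⊔ V) ≤ min (finrank F U) (finrank F V) :=
      Nat.sub_eq_zero_iff_le.mp h
    have hU : U = U ⊔ V :=
      Submodule.eq_of_le_of_finrank_le le_sup_left (hUV.trans (min_le_left _ _))
    have hV : V = U ⊔ V :=
      Submodule.eq_of_le_of_finrank_le le_sup_right (hUV.trans (min_le_right _ _))
    exact hU.trans hV.symm
  · rintro rfl
    rw [dI, sup_idem, min_self, Nat.sub_self]

theorem dI_triangle (U V T : Submodule F W) : dI U T ≤ dI U V + dI V T := by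
  have hmod := Submodule.finrank_sup_add_finrank_le_finrank_sup_add_finrank_sup U V T
  have hmin := Nat.min_add_min_le_add_min (finrank F U) (finrank F V) (finrank F T)
  simp only [dI]
  omega

end InjectionDistance

/-- The injection distance is a metric on the set of subspaces of a
finite-dimensional vector space. -/
theorem dI_is_metric (F W : Type*) [Field F] [AddCommGroup W] [Module F W]
    [FiniteDimensional F W] :
    (∀ U V : Submodule F W, 0 ≤ dI U V) ∧
    (∀ U V : Submodule F W, dI U V = 0 ↔ U = V) ∧
    (∀ U V : Submodule F W, dI U V = dI V U) ∧
    (∀ U V T : Submodule F W, dI U T ≤ dI U V + dI V T) :=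
  ⟨fun _ _ => Nat.zero_le _, fun _ _ => dI_eq_zero_iff, dI_comm, dI_triangle⟩
end

section
/- For any two subspaces U, V of a finite-dimensional vector space, the subspace distance and injection distance satisfy d_S(U,V) = 2·d_I(U,V) - |dim(U) - dim(V)|, equivalently d_I(U,V) = (1/2)·d_S(U,V) + (1/2)·|dim(U) - dim(V)|. -/
/-! By Grassmann's formula `dim (U ∩ V) = dim U + dim V - dim (U + V)`, so
`d_S = 2 dim (U + V) - dim U - dim V`, while `2 d_I = 2 dim (U + V) - 2 min (dim U, dim V)`.
The difference is `dim U + dim V - 2 min (dim U, dim V) = |dim U - dim V|`. -/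

/-- The subspace distance `d_S(U,V) = dim(U+V) - dim(U∩V)`. -/
noncomputable def dS {F W : Type*} [Field F] [AddCommGroup W] [Module F W]
    (U V : Submodule F W) : ℕ :=
  Module.finrank F ↥(U ⊔ V) - Module.finrank F ↥(U ⊓ V)

open Module

section

variable {F W : Type*} [Field F] [AddCommGroup W] [Module F W] [FiniteDimensional F W]
  (U V : Submodule F W)

theorem cast_dS_eq : (dS U V : ℤ) = 2 * finrank F ↥(U ⊔ V) - finrank F U - finrank F V := by
  have grassmann := Submodule.finrank_sup_add_finrank_inf_eq U V
  have finrank_inf_le : finrank F ↥(U ⊓ V) ≤ finrank F ↥(U ⊔ V) :=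
    Submodule.finrank_mono (inf_le_sup (a := U) (b := V))
  unfold dS
  omega

theorem cast_dI_eq :
    (dI U V : ℤ) = finrank F ↥(U ⊔ V) - min (finrank F U : ℤ) (finrank F V) := by
  have min_le_sup : min (finrank F U) (finrank F V) ≤ finrank F ↥(U ⊔ V) :=
    (min_le_left _ _).trans (Submodule.finrank_mono le_sup_left)
  unfold dI
  omega

end

theorem add_sub_two_nsmul_min_eq_abs_sub {α : Type*} [AddCommGroup α] [LinearOrder α]
    [IsOrderedAddMonoid α] (a b : α) : a + b - 2 • min a b = |a - b| := by
  rw [← max_sub_min_eq_abs', ← min_add_max a b, two_nsmul]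
  abel

/-- Relation between subspace distance and injection distance:
`d_S = 2 d_I - |dim U - dim V|`, equivalently `d_I = d_S/2 + |dim U - dim V|/2`. -/
theorem dS_eq_two_dI_sub_abs (F W : Type*) [Field F] [AddCommGroup W] [Module F W]
    [FiniteDimensional F W] (U V : Submodule F W) :
    (dS U V : ℤ) = 2 * (dI U V : ℤ) - |(Module.finrank F ↥U : ℤ) - (Module.finrank F ↥V : ℤ)| ∧
    2 * (dI U V : ℤ) = (dS U V : ℤ) + |(Module.finrank F ↥U : ℤ) - (Module.finrank F ↥V : ℤ)| := by
  have abs_eq := add_sub_two_nsmul_min_eq_abs_sub (finrank F U : ℤ) (finrank F V)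
  rw [two_nsmul] at abs_eq
  rw [cast_dS_eq, cast_dI_eq]
  constructor <;> linarith
end

section
/- Truncating generator matrices cannot increase the subspace distance: let A = (A_1 | A_2) ∈ F^{a×n} and B = (B_1 | B_2) ∈ F^{b×n}, where A_1 ∈ F^{a×n_1} and B_1 ∈ F^{b×n_1} for some 0 ≤ n_1 ≤ n. Then d_S(R(A_1), R(B_1)) ≤ d_S(R(A), R(B)) and d_S(R(A_2), R(B_2)) ≤ d_S(R(A), R(B)). -/
/-- The row space of a matrix: the span of its rows. -/
noncomputable def rowSpace {F ι m : Type*} [Field F] (M : Matrix ι m F) :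
    Submodule F (m → F) :=
  Submodule.span F (Set.range M)

/-- The rank of a matrix, as the dimension of its row space. -/
noncomputable def rk {F ι m : Type*} [Field F] (M : Matrix ι m F) : ℕ :=
  Module.finrank F (rowSpace M)

open Module

section

open Submodule

variable {F M N : Type*} [Field F] [AddCommGroup M] [Module F M] [FiniteDimensional F M]
  [AddCommGroup N] [Module F N]

theorem Submodule.finrank_map_add_finrank_inf_ker (f : M →ₗ[F] N) (W : Submodule F M) :
    finrank F (W.map f) + finrank F ↥(W ⊓ LinearMap.ker f) = finrank F W := by
  have h := LinearMap.finrank_range_add_finrank_ker (f.domRestrict W)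
  rwa [LinearMap.range_domRestrict, LinearMap.ker_domRestrict,
    ← finrank_map_subtype_eq, map_comap_subtype] at h

/-- The kernel of `f` meets `U ⊓ V` in less than it meets `U ⊔ V`, so `f` shrinks the sum at
least as much as the intersection. -/
theorem dS_map_le (f : M →ₗ[F] N) (U V : Submodule F M) :
    dS (U.map f) (V.map f) ≤ dS U V := by
  have hsup := finrank_map_add_finrank_inf_ker f (U ⊔ V)
  have hinf := finrank_map_add_finrank_inf_ker f (U ⊓ V)
  have hker : finrank F ↥(U ⊓ V ⊓ LinearMap.ker f) ≤ finrank F ↥((U ⊔ V) ⊓ LinearMap.ker f) :=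
    finrank_mono (inf_le_inf_right _ inf_le_sup)
  have hmap : finrank F ↥((U ⊓ V).map f) ≤ finrank F ↥(U.map f ⊓ V.map f) :=
    finrank_mono (map_inf_le f)
  rw [dS, dS, ← Submodule.map_sup]
  omega

end

theorem rowSpace_submatrix_id {F ι m m' : Type*} [Field F] (M : Matrix ι m F) (g : m' → m) :
    rowSpace (M.submatrix id g) = (rowSpace M).map (LinearMap.funLeft F F g) := by
  rw [rowSpace, rowSpace, Submodule.map_span]
  exact congrArg _ (Set.range_comp (LinearMap.funLeft F F g) M)

theorem dS_rowSpace_submatrix_id_le {F ι κ m m' : Type*} [Field F] [Finite m]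
    (M : Matrix ι m F) (N : Matrix κ m F) (g : m' → m) :
    dS (rowSpace (M.submatrix id g)) (rowSpace (N.submatrix id g)) ≤
      dS (rowSpace M) (rowSpace N) := by
  rw [rowSpace_submatrix_id, rowSpace_submatrix_id]
  exact dS_map_le _ _ _

/-- Truncating generator matrices cannot increase the subspace distance. -/
theorem dS_truncate (F : Type*) [Field F] (a b n₁ n₂ : ℕ)
    (A₁ : Matrix (Fin a) (Fin n₁) F) (A₂ : Matrix (Fin a) (Fin n₂) F)
    (B₁ : Matrix (Fin b) (Fin n₁) F) (B₂ : Matrix (Fin b) (Fin n₂) F) :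
    dS (rowSpace A₁) (rowSpace B₁)
      ≤ dS (rowSpace (Matrix.fromCols A₁ A₂)) (rowSpace (Matrix.fromCols B₁ B₂)) ∧
    dS (rowSpace A₂) (rowSpace B₂)
      ≤ dS (rowSpace (Matrix.fromCols A₁ A₂)) (rowSpace (Matrix.fromCols B₁ B₂)) :=
  ⟨dS_rowSpace_submatrix_id_le (Matrix.fromCols A₁ A₂) (Matrix.fromCols B₁ B₂) Sum.inl,
    dS_rowSpace_submatrix_id_le (Matrix.fromCols A₁ A₂) (Matrix.fromCols B₁ B₂) Sum.inr⟩
end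

section
/- Truncating generator matrices cannot increase the injection distance: let A = (A_1 | A_2) ∈ F^{a×n} and B = (B_1 | B_2) ∈ F^{b×n}, where A_1 ∈ F^{a×n_1} and B_1 ∈ F^{b×n_1} for some 0 ≤ n_1 ≤ n. Then d_I(R(A_1), R(B_1)) ≤ d_I(R(A), R(B)) and d_I(R(A_2), R(B_2)) ≤ d_I(R(A), R(B)). -/
/-!
Deleting columns is a linear map `F^n → F^{n₁}`, and it sends the row space of a matrix onto
the row space of the truncated matrix. So it suffices that linear maps do not
increase `d_I`. Since `d_I(U,V) = max (dim(U+V) - dim U) (dim(U+V) - dim V)`, this follows from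
rank–nullity: for `S ≤ T`, the dimension lost by `T` under `f` (that of `ker f ⊓ T`) is at least
the dimension lost by `S`, so `dim f(T) - dim f(S) ≤ dim T - dim S`.
-/

open Module

section LinearImage

variable {F W W' : Type*} [Field F] [AddCommGroup W] [Module F W] [AddCommGroup W']
  [Module F W'] (f : W →ₗ[F] W')

lemma finrank_map_add_finrank_ker_inf (S : Submodule F W) [FiniteDimensional F S] :
    finrank F (S.map f) + finrank F ↥(LinearMap.ker f ⊓ S) = finrank F S := by
  have h := LinearMap.finrank_range_add_finrank_ker (f.domRestrict S)
  rw [LinearMap.range_domRestrict, LinearMap.ker_domRestrict] at h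
  have hker : (LinearMap.ker f).comap S.subtype = (LinearMap.ker f ⊓ S).comap S.subtype := by
    rw [Submodule.comap_inf, Submodule.comap_subtype_self, inf_top_eq]
  rw [← h, hker, (Submodule.comapSubtypeEquivOfLe inf_le_right).finrank_eq]

lemma finrank_map_sub_finrank_map_le {S T : Submodule F W} (hST : S ≤ T)
    [FiniteDimensional F T] :
    finrank F (T.map f) - finrank F (S.map f) ≤ finrank F T - finrank F S := by
  have : FiniteDimensional F S := Submodule.finiteDimensional_of_le hST
  have hS := finrank_map_add_finrank_ker_inf f S
  have hT := finrank_map_add_finrank_ker_inf f T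
  have hker : finrank F ↥(LinearMap.ker f ⊓ S) ≤ finrank F ↥(LinearMap.ker f ⊓ T) :=
    Submodule.finrank_mono (inf_le_inf_left _ hST)
  omega

lemma dI_map_le (U V : Submodule F W) [FiniteDimensional F U] [FiniteDimensional F V] :
    dI (U.map f) (V.map f) ≤ dI U V := by
  have hU := finrank_map_sub_finrank_map_le f (le_sup_left : U ≤ U ⊔ V)
  have hV := finrank_map_sub_finrank_map_le f (le_sup_right : V ≤ U ⊔ V)
  have hUV : finrank F U ≤ finrank F ↥(U ⊔ V) := Submodule.finrank_mono le_sup_left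
  have hVU : finrank F V ≤ finrank F ↥(U ⊔ V) := Submodule.finrank_mono le_sup_right
  rw [Submodule.map_sup] at hU hV
  unfold dI
  omega

end LinearImage

lemma map_funLeft_rowSpace {F ι m m' : Type*} [Field F] (M : Matrix ι m F) (e : m' → m) :
    (rowSpace M).map (LinearMap.funLeft F F e) = rowSpace (M.submatrix id e) := by
  rw [rowSpace, rowSpace, Submodule.map_span]
  exact congrArg _ (Set.range_comp _ M).symm

/-- Truncating generator matrices cannot increase the injection distance. -/
theorem dI_truncate (F : Type*) [Field F] (a b n₁ n₂ : ℕ)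
    (A₁ : Matrix (Fin a) (Fin n₁) F) (A₂ : Matrix (Fin a) (Fin n₂) F)
    (B₁ : Matrix (Fin b) (Fin n₁) F) (B₂ : Matrix (Fin b) (Fin n₂) F) :
    dI (rowSpace A₁) (rowSpace B₁)
      ≤ dI (rowSpace (Matrix.fromCols A₁ A₂)) (rowSpace (Matrix.fromCols B₁ B₂)) ∧
    dI (rowSpace A₂) (rowSpace B₂)
      ≤ dI (rowSpace (Matrix.fromCols A₁ A₂)) (rowSpace (Matrix.fromCols B₁ B₂)) := by
  constructor
  · have h := dI_map_le (LinearMap.funLeft F F Sum.inl)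
      (rowSpace (Matrix.fromCols A₁ A₂)) (rowSpace (Matrix.fromCols B₁ B₂))
    rwa [map_funLeft_rowSpace, map_funLeft_rowSpace] at h
  · have h := dI_map_le (LinearMap.funLeft F F Sum.inr)
      (rowSpace (Matrix.fromCols A₁ A₂)) (rowSpace (Matrix.fromCols B₁ B₂))
    rwa [map_funLeft_rowSpace, map_funLeft_rowSpace] at h
end

section
/- The lifting map is an isometry: for all matrices C, D ∈ GF(q)^{r×(n-r)}, the injection distance between the liftings satisfies d_I(I(C), I(D)) = rk(C - D). -/
/-- The lifting of `C ∈ F^{r×m}`: the row space of `(I_r | C)`. -/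
noncomputable def lift {F : Type*} [Field F] {r m : ℕ} (C : Matrix (Fin r) (Fin m) F) :
    Submodule F (Fin r ⊕ Fin m → F) :=
  rowSpace (Matrix.fromCols (1 : Matrix (Fin r) (Fin r) F) C)

/-!
Since `x ᵥ* (I | C) = (x, x C)`, the lifting `I(C)` has dimension `r` and meets the subspace
`{(0, y)}` only in `0`. Every row of `(I | C)` is the corresponding row of `(I | D)` plus that
of `(0 | C - D)`, so `I(C) + I(D) = I(D) ⊕ R(0 | C - D)`, of dimension `r + rk(C - D)`.
-/

open Matrix Module Submodule

section RowSpace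

variable {F ι n : Type*} [Field F]

lemma rowSpace_eq_range_vecMulLinear [Fintype ι] (M : Matrix ι n F) :
    rowSpace M = LinearMap.range M.vecMulLinear :=
  (range_vecMulLinear M).symm

lemma rk_eq_rank [Finite ι] [Fintype n] (M : Matrix ι n F) : rk M = M.rank :=
  (rank_eq_finrank_span_row M).symm

lemma row_mem_rowSpace (M : Matrix ι n F) (i : ι) : M i ∈ rowSpace M :=
  subset_span ⟨i, rfl⟩

lemma rowSpace_le_iff {M : Matrix ι n F} {S : Submodule F (n → F)} :
    rowSpace M ≤ S ↔ ∀ i, M i ∈ S :=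
  span_le.trans Set.range_subset_iff

lemma rowSpace_sup_rowSpace_eq_sup_rowSpace_sub (A B : Matrix ι n F) :
    rowSpace A ⊔ rowSpace B = rowSpace B ⊔ rowSpace (A - B) := by
  refine le_antisymm (sup_le ?_ le_sup_left) (sup_le le_sup_right ?_) <;>
    refine rowSpace_le_iff.2 fun i => ?_
  · rw [← add_sub_cancel (B i) (A i)]
    exact add_mem (mem_sup_left (row_mem_rowSpace B i)) (mem_sup_right (row_mem_rowSpace _ i))
  · exact sub_mem (mem_sup_left (row_mem_rowSpace A i)) (mem_sup_right (row_mem_rowSpace B i))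

end RowSpace

lemma rank_fromCols_zero_left {F m n₁ n₂ : Type*} [Field F] [Fintype m] [Fintype n₁]
    [Fintype n₂] (M : Matrix m n₂ F) : (fromCols (0 : Matrix m n₁ F) M).rank = M.rank := by
  classical
  let P : Matrix n₂ (n₁ ⊕ n₂) F := fromCols 0 1
  let Q : Matrix (n₁ ⊕ n₂) n₂ F := fromRows 0 1
  have hfactor : fromCols 0 M = M * P := by
    rw [mul_fromCols, Matrix.mul_zero, Matrix.mul_one]
  have hsection : P * Q = 1 := by
    rw [fromCols_mul_fromRows, Matrix.mul_zero, Matrix.mul_one, zero_add]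
  rw [hfactor]
  refine le_antisymm (rank_mul_le_left _ _) ?_
  calc M.rank = (M * P * Q).rank := by rw [Matrix.mul_assoc, hsection, Matrix.mul_one]
    _ ≤ (M * P).rank := rank_mul_le_left _ _

lemma rk_fromCols_zero_left {F ι n₁ n₂ : Type*} [Field F] [Fintype ι] [Fintype n₁]
    [Fintype n₂] (M : Matrix ι n₂ F) : rk (fromCols (0 : Matrix ι n₁ F) M) = rk M := by
  rw [rk_eq_rank, rk_eq_rank, rank_fromCols_zero_left]

section Lift

variable {F : Type*} [Field F] {r m : ℕ}

lemma vecMul_fromCols_one (C : Matrix (Fin r) (Fin m) F) (x : Fin r → F) :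
    x ᵥ* fromCols 1 C = Sum.elim x (x ᵥ* C) := by
  rw [vecMul_fromCols, vecMul_one]

lemma finrank_lift (C : Matrix (Fin r) (Fin m) F) : finrank F (lift C) = r := by
  rw [lift, rowSpace_eq_range_vecMulLinear, LinearMap.finrank_range_of_inj, finrank_fin_fun]
  intro x y h
  funext j
  simpa [vecMul_fromCols_one] using congrFun h (Sum.inl j)

lemma disjoint_lift_rowSpace_fromCols_zero {ι : Type*} [Fintype ι]
    (C : Matrix (Fin r) (Fin m) F) (M : Matrix ι (Fin m) F) :
    Disjoint (lift C) (rowSpace (fromCols (0 : Matrix ι (Fin r) F) M)) := by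
  rw [lift, rowSpace_eq_range_vecMulLinear, rowSpace_eq_range_vecMulLinear, disjoint_def]
  rintro _ ⟨x, rfl⟩ ⟨y, hy⟩
  have hx : x = 0 := funext fun j => by
    simpa [vecMul_fromCols_one, vecMul_fromCols] using (congrFun hy (Sum.inl j)).symm
  simp [hx]

lemma fromCols_one_sub_fromCols_one (C D : Matrix (Fin r) (Fin m) F) :
    fromCols 1 C - fromCols 1 D = fromCols (0 : Matrix (Fin r) (Fin r) F) (C - D) := by
  ext i (j | j) <;> simp

end Lift

/-- The lifting map is an isometry: `d_I(I(C), I(D)) = rk(C - D)`. -/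
theorem dI_lift_eq_rank_sub (F : Type*) [Field F] (r m : ℕ)
    (C D : Matrix (Fin r) (Fin m) F) :
    dI (lift C) (lift D) = rk (C - D) := by
  let E := rowSpace (fromCols (0 : Matrix (Fin r) (Fin r) F) (C - D))
  have hsup : lift C ⊔ lift D = lift D ⊔ E := by
    rw [lift, lift, rowSpace_sup_rowSpace_eq_sup_rowSpace_sub, fromCols_one_sub_fromCols_one]
  have hdim : finrank F ↥(lift D ⊔ E) = r + rk (C - D) := by
    have h := finrank_sup_add_finrank_inf_eq (lift D) E
    rwa [(disjoint_lift_rowSpace_fromCols_zero D (C - D)).eq_bot, finrank_bot, add_zero,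
      finrank_lift, ← rk, rk_fromCols_zero_left] at h
  rw [dI, hsup, hdim, finrank_lift, finrank_lift, min_self, Nat.add_sub_cancel_left]
end

section
/- Any lifting of a rank metric code has maximum covering radius: if 𝒞 ⊆ F^{r×(n-r)} is a nonempty set of matrices with r ≤ n-r, and D is the r-dimensional subspace of F^n generated by (0 | D_1) where D_1 ∈ F^{r×(n-r)} has rank r, then for every C ∈ 𝒞, d_I(D, I(C)) = r. -/
/-!
The rows of `(I_r | C)` are independent because their first block is `I_r`, and those of `(0 | D₁)`
because their second block is `D₁`, so both subspaces have dimension `r`. The first block also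
separates them: it vanishes on the span of the rows of `(0 | D₁)` and is injective on that of
`(I_r | C)`. Two trivially intersecting `r`-dimensional subspaces span a `2r`-dimensional one, so
`d_I = 2r - r = r`.
-/

open Matrix Module

section

variable {F : Type*} [Field F] {ι ι' m n : Type*}

lemma dI_eq_max_of_disjoint {W : Type*} [AddCommGroup W] [Module F W] {U V : Submodule F W}
    [FiniteDimensional F U] [FiniteDimensional F V] (h : Disjoint U V) :
    dI U V = max (finrank F U) (finrank F V) := by
  have hsum := Submodule.finrank_sup_add_finrank_inf_eq U V
  rw [h.eq_bot, finrank_bot, add_zero] at hsum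
  rw [dI, hsum]
  omega

instance rowSpace.finiteDimensional [Finite ι] (M : Matrix ι m F) :
    FiniteDimensional F (rowSpace M) :=
  FiniteDimensional.span_of_finite F (Set.finite_range M)

lemma finrank_rowSpace_of_linearIndependent [Fintype ι] {M : Matrix ι m F}
    (h : LinearIndependent F M) : finrank F (rowSpace M) = Fintype.card ι :=
  finrank_span_eq_card h

lemma linearIndependent_of_rk_eq_card [Fintype ι] {M : Matrix ι m F}
    (h : rk M = Fintype.card ι) : LinearIndependent F M :=
  linearIndependent_iff_card_eq_finrank_span.2 h.symm

lemma linearIndependent_fromCols_of_left {A : Matrix ι m F} (hA : LinearIndependent F A)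
    (B : Matrix ι n F) : LinearIndependent F (fromCols A B) :=
  LinearIndependent.of_comp (LinearMap.funLeft F F Sum.inl) hA

lemma linearIndependent_fromCols_of_right (A : Matrix ι m F) {B : Matrix ι n F}
    (hB : LinearIndependent F B) : LinearIndependent F (fromCols A B) :=
  LinearIndependent.of_comp (LinearMap.funLeft F F Sum.inr) hB

lemma rowSpace_fromCols_zero_le_ker (D : Matrix ι' n F) :
    rowSpace (fromCols (0 : Matrix ι' m F) D) ≤ LinearMap.ker (LinearMap.funLeft F F Sum.inl) := by
  rw [rowSpace, Submodule.span_le]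
  rintro _ ⟨i, rfl⟩
  ext j
  simp [LinearMap.funLeft]

lemma disjoint_rowSpace_fromCols_zero {A : Matrix ι m F} (hA : LinearIndependent F A)
    (C : Matrix ι n F) (D : Matrix ι' n F) :
    Disjoint (rowSpace (fromCols (0 : Matrix ι' m F) D)) (rowSpace (fromCols A C)) :=
  -- `funLeft Sum.inl ∘ fromCols A C` is `A` by definition, so `hA` applies as is.
  ((Submodule.range_ker_disjoint (v := fromCols A C) hA).mono_right
    (rowSpace_fromCols_zero_le_ker D)).symm

end

theorem lifting_max_covering_radius_general (F : Type*) [Field F] (r m : ℕ)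
    (𝒞 : Set (Matrix (Fin r) (Fin m) F))
    (D₁ : Matrix (Fin r) (Fin m) F) (hD₁ : rk D₁ = r) :
    ∀ C ∈ 𝒞,
      dI (rowSpace (Matrix.fromCols (0 : Matrix (Fin r) (Fin r) F) D₁))
         (rowSpace (Matrix.fromCols (1 : Matrix (Fin r) (Fin r) F) C)) = r := by
  intro C _
  have hD : LinearIndependent F D₁ :=
    linearIndependent_of_rk_eq_card (by rw [hD₁, Fintype.card_fin])
  have hI : LinearIndependent F (1 : Matrix (Fin r) (Fin r) F) :=
    linearIndependent_rows_iff_isUnit.2 isUnit_one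
  rw [dI_eq_max_of_disjoint (disjoint_rowSpace_fromCols_zero hI C D₁),
    finrank_rowSpace_of_linearIndependent (linearIndependent_fromCols_of_right 0 hD),
    finrank_rowSpace_of_linearIndependent (linearIndependent_fromCols_of_left hI C),
    Fintype.card_fin, max_self]

/-- Liftings of rank metric codes have maximum covering radius: the subspace generated by
`(0 | D₁)` with `rk D₁ = r` is at injection distance `r` from every lifted codeword. -/
theorem lifting_max_covering_radius (F : Type*) [Field F] (r m : ℕ) (hrm : r ≤ m)
    (𝒞 : Set (Matrix (Fin r) (Fin m) F)) (hne : 𝒞.Nonempty)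
    (D₁ : Matrix (Fin r) (Fin m) F) (hD₁ : rk D₁ = r) :
    ∀ C ∈ 𝒞,
      dI (rowSpace (Matrix.fromCols (0 : Matrix (Fin r) (Fin r) F) D₁))
         (rowSpace (Matrix.fromCols (1 : Matrix (Fin r) (Fin r) F) C)) = r :=
  lifting_max_covering_radius_general F r m 𝒞 D₁ hD₁
end

section
/- Sphere-covering bound for constant-dimension codes: if 𝒞 is a set of r-dimensional subspaces of GF(q)^n such that every r-dimensional subspace is within injection distance ρ of some element of 𝒞, then |𝒞| ≥ [n choose r]_q / V_C(ρ), where V_C(ρ) = ∑_{d=0}^{ρ} q^{d²}·[r choose d]_q·[n-r choose d]_q. -/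
/-- Volume of a ball of injection-radius `t` in the Grassmannian `E_r(q,n)`:
`V_C(t) = ∑_{d=0}^{t} q^{d²} [r choose d]_q [n-r choose d]_q`. -/
noncomputable def ballVol (q n r t : ℕ) : ℝ :=
  ∑ d ∈ Finset.range (t + 1),
    (q : ℝ) ^ (d ^ 2) * gaussBinom q r d * gaussBinom q (n - r) d

/-!
The `r`-dimensional subspaces are covered by the balls of radius `ρ` around the codewords, so it
suffices to show that the sphere of radius `d` around an `r`-dimensional `C` has at most
`q^(d²) [r choose d]_q [n-r choose d]_q` elements. For `U` on that sphere, `U ⊓ C` has dimension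
`r - d`, and `U = (U ⊓ C) ⊔ span y` for every `d`-tuple `y` in `U` that is linearly independent
modulo `C`, so `(U, y) ↦ (U ⊓ C, y)` is injective. Both sides are counted through the number
`∏_{i<k} (q^m - q^i)` of linearly independent `k`-tuples in `𝔽_q^m`, which also shows that
`[m choose k]_q` is the number of `k`-dimensional subspaces.
-/

open Module Finset Function

noncomputable def indepTupleCount (q m k : ℕ) : ℝ :=
  ∏ i ∈ range k, ((q : ℝ) ^ m - (q : ℝ) ^ i)

lemma indepTupleCount_pos {q : ℕ} (hq : 1 < q) {m k : ℕ} (hkm : k ≤ m) :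
    0 < indepTupleCount q m k :=
  prod_pos fun i hi => sub_pos.2 <|
    pow_lt_pow_right₀ (by exact_mod_cast hq) ((mem_range.1 hi).trans_le hkm)

lemma gaussBinom_mul_indepTupleCount {q : ℕ} (hq : 1 < q) (m k : ℕ) :
    gaussBinom q m k * indepTupleCount q k k = indepTupleCount q m k := by
  rw [gaussBinom, indepTupleCount, indepTupleCount, ← prod_mul_distrib]
  refine prod_congr rfl fun i hi => div_mul_cancel₀ _ (sub_ne_zero.2 ?_)
  exact (pow_lt_pow_right₀ (by exact_mod_cast hq) (mem_range.1 hi)).ne'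

abbrev SubspacesOfFinrank (K V : Type*) [Field K] [AddCommGroup V] [Module K V] (k : ℕ) :=
  {X : Submodule K V // finrank K X = k}

section FiniteDimensional

variable {K V : Type*} [Field K] [AddCommGroup V] [Module K V]

lemma finrank_comap_subtype (p p' : Submodule K V) :
    finrank K (p'.comap p.subtype) = finrank K ↥(p ⊓ p') := by
  rw [← Submodule.map_comap_subtype,
    LinearEquiv.finrank_eq (Submodule.equivMapOfInjective _ p.injective_subtype _)]

variable [FiniteDimensional K V]

lemma dI_add_finrank_inf {U C : Submodule K V} {r : ℕ} (hU : finrank K U = r)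
    (hC : finrank K C = r) : dI U C + finrank K ↥(U ⊓ C) = r := by
  have := Submodule.finrank_sup_add_finrank_inf_eq U C
  have := Submodule.finrank_mono (le_sup_left : U ≤ U ⊔ C)
  rw [dI, hU, hC, min_self]
  omega

lemma inf_sup_span_eq {U C : Submodule K V} {d : ℕ} {y : Fin d → V} (hyU : ∀ i, y i ∈ U)
    (hy : LinearIndependent K (C.mkQ ∘ y)) (hd : finrank K ↥(U ⊓ C) + d = finrank K U) :
    U ⊓ C ⊔ Submodule.span K (Set.range y) = U := by
  have hdisj : Disjoint (U ⊓ C) (Submodule.span K (Set.range y)) :=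
    (Submodule.range_ker_disjoint hy).symm.mono_left (by rw [Submodule.ker_mkQ]; exact inf_le_right)
  have := Submodule.finrank_sup_add_finrank_inf_eq (U ⊓ C) (Submodule.span K (Set.range y))
  rw [hdisj.eq_bot, finrank_bot, finrank_span_eq_card (hy.of_comp _), Fintype.card_fin] at this
  refine Submodule.eq_of_le_of_finrank_le (sup_le inf_le_left ?_) (by omega)
  exact Submodule.span_le.2 (Set.range_subset_iff.2 hyU)

lemma span_range_subtype_comp_eq {k : ℕ} {X : Submodule K V} (hX : finrank K X = k)
    {t : Fin k → X} (ht : LinearIndependent K t) :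
    Submodule.span K (Set.range (X.subtype ∘ t)) = X := by
  refine Submodule.eq_of_le_of_finrank_le ?_ ?_
  · rw [Submodule.span_le, Set.range_comp]
    rintro _ ⟨x, -, rfl⟩
    exact x.2
  · rw [finrank_span_eq_card (ht.map' _ X.ker_subtype), Fintype.card_fin, hX]

noncomputable def sigmaLinearIndependentEquiv (k : ℕ) :
    (Σ X : SubspacesOfFinrank K V k, {t : Fin k → X.1 // LinearIndependent K t}) ≃
      {t : Fin k → V // LinearIndependent K t} :=
  Equiv.ofBijective (fun p => ⟨p.1.1.subtype ∘ p.2.1, p.2.2.map' _ p.1.1.ker_subtype⟩) <| by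
    constructor
    · rintro ⟨⟨X, hX⟩, ⟨t, ht⟩⟩ ⟨⟨X', hX'⟩, ⟨t', ht'⟩⟩ h
      have h' : X.subtype ∘ t = X'.subtype ∘ t' := congrArg Subtype.val h
      obtain rfl : X = X' := by
        rw [← span_range_subtype_comp_eq hX ht, ← span_range_subtype_comp_eq hX' ht', h']
      obtain rfl : t = t' := funext fun i => Subtype.ext (congrFun h' i)
      rfl
    · rintro ⟨t, ht⟩
      refine ⟨⟨⟨Submodule.span K (Set.range t), ?_⟩, _, linearIndependent_span ht⟩, rfl⟩
      rw [finrank_span_eq_card ht, Fintype.card_fin]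

end FiniteDimensional

section FiniteField

variable {K V W : Type*} [Field K] [Fintype K] [AddCommGroup V] [Module K V] [Finite V]
  [AddCommGroup W] [Module K W]

lemma natCard_linearIndependent (k : ℕ) :
    (Nat.card {s : Fin k → V // LinearIndependent K s} : ℝ) =
      indepTupleCount (Fintype.card K) (finrank K V) k := by
  rcases le_or_gt k (finrank K V) with hk | hk
  · rw [card_linearIndependent hk, Nat.cast_prod, Fin.prod_univ_eq_prod_range
      (fun i => ((Fintype.card K ^ finrank K V - Fintype.card K ^ i : ℕ) : ℝ))]
    refine prod_congr rfl fun i hi => ?_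
    rw [Nat.cast_sub (Nat.pow_le_pow_right Fintype.card_pos ((mem_range.1 hi).le.trans hk))]
    push_cast
    rfl
  · have : IsEmpty {s : Fin k → V // LinearIndependent K s} :=
      ⟨fun s => by simpa using (s.2.fintype_card_le_finrank.trans_lt hk)⟩
    rw [Nat.card_of_isEmpty, Nat.cast_zero, indepTupleCount,
      prod_eq_zero (mem_range.2 hk) (sub_self _)]

lemma natCard_subspacesOfFinrank (k : ℕ) :
    (Nat.card (SubspacesOfFinrank K V k) : ℝ) =
      gaussBinom (Fintype.card K) (finrank K V) k := by
  have := Fintype.ofFinite (SubspacesOfFinrank K V k)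
  have hq : 1 < Fintype.card K := Fintype.one_lt_card
  have hcount :
      (Nat.card (SubspacesOfFinrank K V k) : ℝ) * indepTupleCount (Fintype.card K) k k =
        indepTupleCount (Fintype.card K) (finrank K V) k := by
    rw [← natCard_linearIndependent, ← Nat.card_congr (sigmaLinearIndependentEquiv k),
      Nat.card_sigma, Nat.cast_sum,
      sum_congr rfl fun X _ => by rw [natCard_linearIndependent, X.2],
      sum_const, card_univ, nsmul_eq_mul, Nat.card_eq_fintype_card]
  rw [← gaussBinom_mul_indepTupleCount hq (finrank K V) k] at hcount
  exact mul_right_cancel₀ (indepTupleCount_pos hq le_rfl).ne' hcount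

lemma gaussBinom_nonneg (m k : ℕ) : 0 ≤ gaussBinom (Fintype.card K) m k := by
  have := natCard_subspacesOfFinrank (K := K) (V := Fin m → K) k
  rw [finrank_fin_fun] at this
  exact this ▸ Nat.cast_nonneg _

lemma natCard_subspacesOfFinrank_sub {k : ℕ} (hk : k ≤ finrank K V) :
    (Nat.card (SubspacesOfFinrank K V (finrank K V - k)) : ℝ) =
      gaussBinom (Fintype.card K) (finrank K V) k := by
  have := Module.finite_of_finite K (M := Dual K V)
  have e : SubspacesOfFinrank K V (finrank K V - k) ≃ SubspacesOfFinrank K (Dual K V) k :=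
    ((Subspace.orderIsoFiniteDimensional (K := K) (V := V)).toEquiv.trans
      OrderDual.ofDual).subtypeEquiv fun X => by
        have := X.finrank_add_finrank_dualAnnihilator_eq
        change _ ↔ finrank K X.dualAnnihilator = k
        omega
  rw [Nat.card_congr e, natCard_subspacesOfFinrank, Subspace.dual_finrank_eq]

lemma natCard_linearIndependent_comp (f : V →ₗ[K] W) (d : ℕ) :
    (Nat.card {y : Fin d → V // LinearIndependent K (f ∘ y)} : ℝ) =
      (Fintype.card K : ℝ) ^ (finrank K (LinearMap.ker f) * d) *
        indepTupleCount (Fintype.card K) (finrank K (LinearMap.range f)) d := by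
  set g := f.rangeRestrict
  obtain ⟨σ, hσ⟩ := g.exists_rightInverse_of_surjective f.range_rangeRestrict
  have hgσ : ∀ s, g (σ s) = s := LinearMap.congr_fun hσ
  have hli : ∀ y : Fin d → V, LinearIndependent K (f ∘ y) ↔ LinearIndependent K (g ∘ y) :=
    fun y => by
      rw [← (LinearMap.range f).subtype.linearIndependent_iff (Submodule.ker_subtype _)]
      rfl
  let e : {y : Fin d → V // LinearIndependent K (f ∘ y)} ≃
      {s : Fin d → LinearMap.range f // LinearIndependent K s} × (Fin d → LinearMap.ker g) :=
    { toFun y := (⟨g ∘ y, (hli y).1 y.2⟩, fun i => ⟨y.1 i - σ (g (y.1 i)), by simp [hgσ]⟩)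
      invFun p := ⟨fun i => σ (p.1.1 i) + p.2 i, (hli _).2 <| by
        convert p.1.2 using 1
        ext i
        simp [hgσ]⟩
      left_inv y := by ext; simp
      right_inv p := by ext <;> simp [hgσ] }
  have : Finite (LinearMap.range f) := Finite.of_surjective _ f.surjective_rangeRestrict
  rw [Nat.card_congr e, Nat.card_prod, Nat.cast_mul, natCard_linearIndependent, Nat.card_fun,
    natCard_eq_pow_finrank (K := K), LinearMap.ker_rangeRestrict, Nat.card_fin,
    Nat.card_eq_fintype_card]
  push_cast
  ring

lemma natCard_tuple_mem_linearIndependent_mkQ (U C : Submodule K V) (d : ℕ) :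
    (Nat.card {y : Fin d → V // (∀ i, y i ∈ U) ∧ LinearIndependent K (C.mkQ ∘ y)} : ℝ) =
      (Fintype.card K : ℝ) ^ (finrank K ↥(U ⊓ C) * d) *
        indepTupleCount (Fintype.card K) (finrank K U - finrank K ↥(U ⊓ C)) d := by
  let e : {y : Fin d → V // (∀ i, y i ∈ U) ∧ LinearIndependent K (C.mkQ ∘ y)} ≃
      {z : Fin d → U // LinearIndependent K ((C.mkQ ∘ₗ U.subtype) ∘ z)} :=
    { toFun y := ⟨fun i => ⟨y.1 i, y.2.1 i⟩, y.2.2⟩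
      invFun z := ⟨fun i => z.1 i, fun i => (z.1 i).2, z.2⟩
      left_inv _ := rfl
      right_inv _ := rfl }
  have hker : finrank K (LinearMap.ker (C.mkQ ∘ₗ U.subtype)) = finrank K ↥(U ⊓ C) := by
    rw [LinearMap.ker_comp, Submodule.ker_mkQ, finrank_comap_subtype]
  have hrank := LinearMap.finrank_range_add_finrank_ker (C.mkQ ∘ₗ U.subtype)
  rw [Nat.card_congr e, natCard_linearIndependent_comp, hker]
  congr 2
  omega

lemma natCard_sphere_mul_le (C : Submodule K V) (r d : ℕ) :
    (Nat.card {U : SubspacesOfFinrank K V r // finrank K ↥(U.1 ⊓ C) + d = r} : ℝ) *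
        ((Fintype.card K : ℝ) ^ ((r - d) * d) * indepTupleCount (Fintype.card K) d d) ≤
      Nat.card (SubspacesOfFinrank K C (r - d)) *
        Nat.card {y : Fin d → V // LinearIndependent K (C.mkQ ∘ y)} := by
  let S := {U : SubspacesOfFinrank K V r // finrank K ↥(U.1 ⊓ C) + d = r}
  let Φ : (Σ U : S, {y : Fin d → V // (∀ i, y i ∈ U.1.1) ∧ LinearIndependent K (C.mkQ ∘ y)}) →
      SubspacesOfFinrank K C (r - d) × {y : Fin d → V // LinearIndependent K (C.mkQ ∘ y)} :=
    fun p => (⟨p.1.1.1.comap C.subtype, by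
      rw [finrank_comap_subtype, inf_comm]
      have := p.1.2
      omega⟩, ⟨p.2.1, p.2.2.2⟩)
  have hΦ : Injective Φ := by
    rintro ⟨⟨⟨U, hU⟩, hUC⟩, y, hyU, hy⟩ ⟨⟨⟨U', hU'⟩, hUC'⟩, y', hyU', hy'⟩ h
    simp only [Φ, Prod.mk.injEq, Subtype.mk.injEq] at h
    obtain ⟨hcomap, rfl⟩ := h
    have hinf : U ⊓ C = U' ⊓ C := by
      simpa only [Submodule.map_comap_subtype, inf_comm C] using
        congrArg (Submodule.map C.subtype) hcomap
    dsimp only at hUC hUC' hyU hyU'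
    obtain rfl : U = U' :=
      calc U = U ⊓ C ⊔ Submodule.span K (Set.range y) :=
          (inf_sup_span_eq hyU hy (by omega)).symm
        _ = U' := by rw [hinf, inf_sup_span_eq hyU' hy (by omega)]
    rfl
  have := Fintype.ofFinite S
  have hcard := Nat.card_le_card_of_injective Φ hΦ
  rw [Nat.card_prod, Nat.card_sigma] at hcard
  have hfiber : ∀ U : S, (Nat.card {y : Fin d → V //
      (∀ i, y i ∈ U.1.1) ∧ LinearIndependent K (C.mkQ ∘ y)} : ℝ) =
        (Fintype.card K : ℝ) ^ ((r - d) * d) * indepTupleCount (Fintype.card K) d d := by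
    rintro ⟨⟨U, hU⟩, hUC⟩
    dsimp only at hUC ⊢
    rw [natCard_tuple_mem_linearIndependent_mkQ, hU, show finrank K ↥(U ⊓ C) = r - d by omega,
      show r - (r - d) = d by omega]
  calc _ = ∑ U : S, (Nat.card {y : Fin d → V //
        (∀ i, y i ∈ U.1.1) ∧ LinearIndependent K (C.mkQ ∘ y)} : ℝ) := by
        rw [sum_congr rfl fun U _ => hfiber U, sum_const, card_univ, nsmul_eq_mul,
          Nat.card_eq_fintype_card]
    _ ≤ _ := by exact_mod_cast hcard

lemma natCard_sphere_le {C : Submodule K V} {r : ℕ} (hC : finrank K C = r) (d : ℕ) :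
    (Nat.card {U : SubspacesOfFinrank K V r // dI U.1 C = d} : ℝ) ≤
      (Fintype.card K : ℝ) ^ (d ^ 2) * gaussBinom (Fintype.card K) r d *
        gaussBinom (Fintype.card K) (finrank K V - r) d := by
  have hq : 1 < Fintype.card K := Fintype.one_lt_card
  have hsphere : {U : SubspacesOfFinrank K V r // dI U.1 C = d} ≃
      {U : SubspacesOfFinrank K V r // finrank K ↥(U.1 ⊓ C) + d = r} :=
    Equiv.subtypeEquivRight fun U => by have := dI_add_finrank_inf U.2 hC; omega
  rw [Nat.card_congr hsphere]
  rcases lt_or_ge r d with hd | hd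
  · have : IsEmpty {U : SubspacesOfFinrank K V r // finrank K ↥(U.1 ⊓ C) + d = r} :=
      ⟨fun U => by have := U.2; omega⟩
    rw [Nat.card_of_isEmpty, Nat.cast_zero]
    have := gaussBinom_nonneg (K := K) r d
    have := gaussBinom_nonneg (K := K) (finrank K V - r) d
    positivity
  have hgrass :
      (Nat.card (SubspacesOfFinrank K C (r - d)) : ℝ) = gaussBinom (Fintype.card K) r d := by
    have := natCard_subspacesOfFinrank_sub (V := C) (hC ▸ hd)
    rwa [hC] at this
  have htuples : (Nat.card {y : Fin d → V // LinearIndependent K (C.mkQ ∘ y)} : ℝ) =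
      (Fintype.card K : ℝ) ^ (r * d) * indepTupleCount (Fintype.card K) (finrank K V - r) d := by
    rw [natCard_linearIndependent_comp, Submodule.ker_mkQ, Submodule.range_mkQ, finrank_top,
      Submodule.finrank_quotient, hC]
  have hpos : 0 < (Fintype.card K : ℝ) ^ ((r - d) * d) * indepTupleCount (Fintype.card K) d d :=
    mul_pos (by positivity) (indepTupleCount_pos hq le_rfl)
  have hbound := natCard_sphere_mul_le C r d
  rw [hgrass, htuples, ← gaussBinom_mul_indepTupleCount hq (finrank K V - r) d] at hbound
  refine le_of_mul_le_mul_right (hbound.trans_eq ?_) hpos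
  rw [show r * d = (r - d) * d + d ^ 2 by rw [sq, ← add_mul, Nat.sub_add_cancel hd], pow_add]
  ring

end FiniteField

lemma natCard_le_sum_natCard_sphere {α β : Type*} [Finite α] (s : Finset β) (δ : α → β → ℕ)
    (ρ : ℕ) (hcov : ∀ a, ∃ b ∈ s, δ a b ≤ ρ) :
    Nat.card α ≤ ∑ b ∈ s, ∑ d ∈ range (ρ + 1), Nat.card {a // δ a b = d} := by
  classical
  have := Fintype.ofFinite α
  calc Nat.card α = #(univ : Finset α) := by rw [card_univ, Nat.card_eq_fintype_card]
    _ ≤ #((s ×ˢ range (ρ + 1)).biUnion fun p => {a | δ a p.1 = p.2}) := by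
        refine card_le_card fun a _ => mem_biUnion.2 ?_
        obtain ⟨b, hb, hab⟩ := hcov a
        exact ⟨(b, δ a b), mem_product.2 ⟨hb, mem_range.2 (by omega)⟩, by simp⟩
    _ ≤ ∑ p ∈ s ×ˢ range (ρ + 1), #{a | δ a p.1 = p.2} := card_biUnion_le
    _ = _ := by simp only [sum_product, Nat.card_eq_fintype_card, Fintype.card_subtype]

theorem sphere_covering_bound_general (q n r ρ : ℕ) (F : Type*) [Field F] [Fintype F]
    (hq : Fintype.card F = q)
    (𝒞 : Finset (Submodule F (Fin n → F)))
    (hdim : ∀ C ∈ 𝒞, Module.finrank F ↥C = r)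
    (hcov : ∀ U : Submodule F (Fin n → F), Module.finrank F ↥U = r →
      ∃ C ∈ 𝒞, dI U C ≤ ρ) :
    gaussBinom q n r / ballVol q n r ρ ≤ (𝒞.card : ℝ) := by
  subst hq
  have hV : finrank F (Fin n → F) = n := finrank_fin_fun F
  have hball : 0 ≤ ballVol (Fintype.card F) n r ρ := sum_nonneg fun d _ => by
    have := gaussBinom_nonneg (K := F) r d
    have := gaussBinom_nonneg (K := F) (n - r) d
    positivity
  refine div_le_of_le_mul₀ hball (Nat.cast_nonneg _) ?_
  calc gaussBinom (Fintype.card F) n r = Nat.card (SubspacesOfFinrank F (Fin n → F) r) := by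
        rw [natCard_subspacesOfFinrank, hV]
    _ ≤ ∑ C ∈ 𝒞, ∑ d ∈ range (ρ + 1),
          (Nat.card {U : SubspacesOfFinrank F (Fin n → F) r // dI U.1 C = d} : ℝ) := by
        have hcover := natCard_le_sum_natCard_sphere 𝒞
          (fun (U : SubspacesOfFinrank F (Fin n → F) r) C => dI U.1 C) ρ fun U => hcov U.1 U.2
        exact_mod_cast hcover
    _ ≤ ∑ _C ∈ 𝒞, ballVol (Fintype.card F) n r ρ :=
        sum_le_sum fun C hC => sum_le_sum fun d _ => by
          simpa only [hV] using natCard_sphere_le (hdim C hC) d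
    _ = 𝒞.card * ballVol (Fintype.card F) n r ρ := by rw [sum_const, nsmul_eq_mul]

/-- Sphere-covering bound for constant-dimension codes. -/
theorem sphere_covering_bound (q n r ρ : ℕ) (F : Type*) [Field F] [Fintype F]
    (hq : Fintype.card F = q) (hr : r ≤ n)
    (𝒞 : Finset (Submodule F (Fin n → F)))
    (hdim : ∀ C ∈ 𝒞, Module.finrank F ↥C = r)
    (hcov : ∀ U : Submodule F (Fin n → F), Module.finrank F ↥U = r →
      ∃ C ∈ 𝒞, dI U C ≤ ρ) :
    gaussBinom q n r / ballVol q n r ρ ≤ (𝒞.card : ℝ) :=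
  sphere_covering_bound_general q n r ρ F hq 𝒞 hdim hcov
end

section
/- Probabilistic upper bound on covering CDCs: let Q = [n choose r]_q and let V_C(ρ) be the ball volume in the injection metric on r-dimensional subspaces of GF(q)^n with 0 < ρ < r and V_C(ρ) < Q. Then there exists a set 𝒞 of r-dimensional subspaces with covering radius at most ρ and |𝒞| ≤ ⌊-1/log_Q(1 - V_C(ρ)/Q)⌋ + 1; in particular the minimum cardinality K_C(q,n,r,ρ) of a covering code satisfies K_C(q,n,r,ρ) ≤ 1/(1 - log_Q(Q - V_C(ρ))) + 1. -/
/-- The minimum cardinality `K_C(q,n,r,ρ)` of a constant-dimension code in `E_r(q,n)`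
with injection covering radius at most `ρ`. -/
noncomputable def KC (F : Type*) [Field F] [Fintype F] (n r ρ : ℕ) : ℕ :=
  sInf {k : ℕ | ∃ 𝒞 : Finset (Submodule F (Fin n → F)),
    (∀ C ∈ 𝒞, Module.finrank F ↥C = r) ∧
    (∀ U : Submodule F (Fin n → F), Module.finrank F ↥U = r → ∃ C ∈ 𝒞, dI U C ≤ ρ) ∧
    𝒞.card = k}

/-!
Pick `K` codewords independently and uniformly from the `Q` subspaces of dimension `r`. The
radius-`ρ` ball around any `r`-space contains at least `V = ballVol` of them, so a fixed `r`-space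
stays uncovered with probability at most `(1 - V/Q)^K`, and the expected number of uncovered
`r`-spaces is at most `Q (1 - V/Q)^K`. This is `< 1` as soon as `K > -1 / log_Q (1 - V/Q)`, so
some choice covers everything.

The lower bound on balls counts, for `d ≤ ρ`, the `r`-spaces `U` with `dim (C + U) = r + d`.
Writing `V = C ⊕ C'`, the spaces `A + {b + φ b | b ∈ B}` with `A ≤ C` of dimension `r - d`,
`B ≤ C'` of dimension `d` and `φ : B → D` linear, `D` a complement of `A` in `C`, are pairwise
distinct (`A = U ∩ C` and `B = (C + U) ∩ C'`), which gives `q^(d²) [r d]_q [n-r d]_q` of them.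
-/

open Finset Module

section GaussBinom

/-- `(x - 1)^k` times the `x`-factorial `[k]_x!`. -/
noncomputable def qFactorial (x : ℝ) (k : ℕ) : ℝ :=
  ∏ j ∈ range k, (x ^ (j + 1) - 1)

lemma qFactorial_pos {x : ℝ} (hx : 1 < x) (k : ℕ) : 0 < qFactorial x k :=
  prod_pos fun j _ => sub_pos.2 (one_lt_pow₀ hx (Nat.succ_ne_zero j))

lemma prod_pow_sub_pow_mul_qFactorial (x : ℝ) {d m : ℕ} (h : d ≤ m) :
    (∏ i ∈ range d, (x ^ m - x ^ i)) * qFactorial x (m - d) =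
      (∏ i ∈ range d, x ^ i) * qFactorial x m := by
  induction d with
  | zero => simp
  | succ d ih =>
    have hsplit : qFactorial x (m - d) = qFactorial x (m - (d + 1)) * (x ^ (m - d) - 1) := by
      rw [show m - d = m - (d + 1) + 1 by omega, qFactorial, prod_range_succ]
      rfl
    have hfactor : x ^ m - x ^ d = x ^ d * (x ^ (m - d) - 1) := by
      rw [mul_sub, mul_one, ← pow_add, Nat.add_sub_cancel' (by omega)]
    have ih := ih (by omega)
    rw [hsplit] at ih
    rw [prod_range_succ, prod_range_succ, hfactor]
    linear_combination x ^ d * ih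

lemma gaussBinom_mul_qFactorial_mul_qFactorial {q m d : ℕ} (hq : 1 < q) (h : d ≤ m) :
    gaussBinom q m d * (qFactorial q d * qFactorial q (m - d)) = qFactorial q m := by
  have hx : (1 : ℝ) < q := by exact_mod_cast hq
  have hnum := prod_pow_sub_pow_mul_qFactorial (q : ℝ) h
  have hden := prod_pow_sub_pow_mul_qFactorial (q : ℝ) (le_refl d)
  have hd0 : qFactorial q d ≠ 0 := (qFactorial_pos hx d).ne'
  rw [Nat.sub_self, qFactorial, prod_range_zero, mul_one] at hden
  rw [gaussBinom, prod_div_distrib, hden]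
  field_simp
  linear_combination hnum

lemma gaussBinom_symm {q m d : ℕ} (hq : 1 < q) (h : d ≤ m) :
    gaussBinom q m (m - d) = gaussBinom q m d := by
  have hx : (1 : ℝ) < q := by exact_mod_cast hq
  have hne : qFactorial q d * qFactorial q (m - d) ≠ 0 :=
    (mul_pos (qFactorial_pos hx d) (qFactorial_pos hx _)).ne'
  have hsymm := gaussBinom_mul_qFactorial_mul_qFactorial hq (Nat.sub_le m d)
  rw [Nat.sub_sub_self h, mul_comm (qFactorial _ _)] at hsymm
  exact mul_right_cancel₀ hne (hsymm.trans (gaussBinom_mul_qFactorial_mul_qFactorial hq h).symm)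

lemma gaussBinom_eq_zero_of_lt {q m d : ℕ} (h : m < d) : gaussBinom q m d = 0 :=
  prod_eq_zero (mem_range.2 h) (by simp)

lemma gaussBinom_nonneg_s18 {q : ℕ} (hq : 1 < q) (m d : ℕ) : 0 ≤ gaussBinom q m d := by
  have hx : (1 : ℝ) < q := by exact_mod_cast hq
  rcases le_or_gt d m with h | h
  · exact prod_nonneg fun i hi => div_nonneg
      (sub_nonneg.2 (pow_le_pow_right₀ hx.le (by simp at hi; omega)))
      (sub_nonneg.2 (pow_le_pow_right₀ hx.le (by simp at hi; omega)))
  · exact (gaussBinom_eq_zero_of_lt h).ge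

lemma one_le_ballVol {q : ℕ} (hq : 1 < q) (n r ρ : ℕ) : 1 ≤ ballVol q n r ρ := by
  have hterm : ∀ d ∈ range (ρ + 1),
      0 ≤ (q : ℝ) ^ (d ^ 2) * gaussBinom q r d * gaussBinom q (n - r) d := fun d _ => by
    have := gaussBinom_nonneg_s18 hq r d
    have := gaussBinom_nonneg_s18 hq (n - r) d
    positivity
  calc (1 : ℝ) = (q : ℝ) ^ (0 ^ 2) * gaussBinom q r 0 * gaussBinom q (n - r) 0 := by
        simp [gaussBinom]
    _ ≤ ballVol q n r ρ := single_le_sum hterm (by simp)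

end GaussBinom

lemma Nat.card_sigma_of_forall_card_eq {α : Type*} [Finite α] {β : α → Type*}
    [∀ a, Finite (β a)] {c : ℕ} (h : ∀ a, Nat.card (β a) = c) :
    Nat.card (Σ a, β a) = Nat.card α * c := by
  cases nonempty_fintype α
  rw [Nat.card_sigma, sum_congr rfl fun a _ => h a, sum_const, Finset.card_univ,
    Nat.card_eq_fintype_card, smul_eq_mul]

lemma Nat.cast_prod_pow_sub_pow {q d k : ℕ} (hq : 1 ≤ q) (hd : d ≤ k) :
    ((∏ i ∈ range d, (q ^ k - q ^ i) : ℕ) : ℝ) = ∏ i ∈ range d, ((q : ℝ) ^ k - (q : ℝ) ^ i) := by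
  rw [Nat.cast_prod]
  refine prod_congr rfl fun i hi => ?_
  rw [Nat.cast_sub (Nat.pow_le_pow_right hq (by simp at hi; omega))]
  push_cast
  rfl

section SubspaceCount

variable {F V : Type*} [DivisionRing F] [Fintype F] [AddCommGroup V] [Module F V] [Finite V]

lemma natCard_linearIndependent_span_eq {d : ℕ} (W : Submodule F V) (hW : finrank F W = d) :
    Nat.card {s : {s : Fin d → V // LinearIndependent F s} // Submodule.span F (Set.range s.1) = W}
      = ∏ i ∈ range d, (Fintype.card F ^ d - Fintype.card F ^ i) := by
  subst hW
  rw [← Fin.prod_univ_eq_prod_range (fun i => Fintype.card F ^ _ - Fintype.card F ^ i),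
    ← card_linearIndependent le_rfl]
  refine Nat.card_congr
    { toFun := fun s => ⟨fun i => ⟨s.1.1 i, Submodule.span_le.1 s.2.le (Set.mem_range_self i)⟩,
        .of_comp W.subtype s.1.2⟩
      invFun := fun t => ⟨⟨W.subtype ∘ t.1, t.2.map' W.subtype W.ker_subtype⟩, ?_⟩
      left_inv := fun s => rfl
      right_inv := fun t => rfl }
  refine Submodule.eq_of_le_of_finrank_eq ?_ ?_
  · rw [Submodule.span_le]
    rintro _ ⟨i, rfl⟩
    exact (t.1 i).2
  · rw [finrank_span_eq_card (t.2.map' W.subtype W.ker_subtype), Fintype.card_fin]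

lemma natCard_finrank_eq_mul {d : ℕ} (hd : d ≤ finrank F V) :
    Nat.card {W : Submodule F V // finrank F W = d} *
        ∏ i ∈ range d, (Fintype.card F ^ d - Fintype.card F ^ i)
      = ∏ i ∈ range d, (Fintype.card F ^ finrank F V - Fintype.card F ^ i) := by
  let span : {s : Fin d → V // LinearIndependent F s} → {W : Submodule F V // finrank F W = d} :=
    fun s => ⟨Submodule.span F (Set.range s.1), by rw [finrank_span_eq_card s.2, Fintype.card_fin]⟩
  rw [← Fin.prod_univ_eq_prod_range (fun i => _ ^ finrank F V - _), ← card_linearIndependent hd,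
    ← Nat.card_congr (Equiv.sigmaFiberEquiv span)]
  refine (Nat.card_sigma_of_forall_card_eq fun W => ?_).symm
  rw [← natCard_linearIndependent_span_eq W.1 W.2]
  exact Nat.card_congr (Equiv.subtypeEquivRight fun s => Subtype.ext_iff)

theorem natCard_finrank_eq (d : ℕ) :
    (Nat.card {W : Submodule F V // finrank F W = d} : ℝ)
      = gaussBinom (Fintype.card F) (finrank F V) d := by
  rcases le_or_gt d (finrank F V) with hd | hd
  · have hq : 1 < Fintype.card F := Fintype.one_lt_card
    have hprod := congrArg (Nat.cast : ℕ → ℝ) (natCard_finrank_eq_mul (F := F) (V := V) hd)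
    rw [Nat.cast_mul, Nat.cast_prod_pow_sub_pow hq.le le_rfl,
      Nat.cast_prod_pow_sub_pow hq.le hd] at hprod
    rw [gaussBinom, prod_div_distrib, eq_div_iff]
    · exact hprod
    · exact prod_ne_zero_iff.2 fun i hi => sub_ne_zero.2
        (pow_lt_pow_right₀ (by exact_mod_cast hq) (mem_range.1 hi)).ne'
  · rw [gaussBinom_eq_zero_of_lt hd, Nat.cast_eq_zero, Nat.card_eq_zero]
    exact Or.inl ⟨fun W => hd.not_ge (W.2 ▸ Submodule.finrank_le W.1)⟩

theorem natCard_le_and_finrank_eq (W : Submodule F V) (k : ℕ) :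
    (Nat.card {A : Submodule F V // A ≤ W ∧ finrank F A = k} : ℝ)
      = gaussBinom (Fintype.card F) (finrank F W) k := by
  rw [← natCard_finrank_eq, ← Nat.card_congr (Equiv.subtypeSubtypeEquivSubtypeInter _ _)]
  congr 1
  exact (Nat.card_congr ((Submodule.MapSubtype.orderIso W).toEquiv.subtypeEquiv
    fun A => by rw [← Submodule.finrank_map_subtype_eq W A]; rfl)).symm

end SubspaceCount

section GraphSubspace

variable {F V : Type*} [DivisionRing F] [AddCommGroup V] [Module F V]

def graphSubspace (A : Submodule F V) {B D : Submodule F V} (φ : B →ₗ[F] D) : Submodule F V :=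
  A ⊔ LinearMap.range (B.subtype + D.subtype ∘ₗ φ)

variable {A B C C' D : Submodule F V}

lemma mem_graphSubspace (φ : B →ₗ[F] D) {x : V} :
    x ∈ graphSubspace A φ ↔ ∃ b : B, x - (b + φ b) ∈ A := by
  simp only [graphSubspace, Submodule.mem_sup, LinearMap.mem_range]
  constructor
  · rintro ⟨a, ha, _, ⟨b, rfl⟩, rfl⟩
    exact ⟨b, by simpa using ha⟩
  · rintro ⟨b, hb⟩
    exact ⟨_, hb, _, ⟨b, rfl⟩, by simp⟩

lemma eq_zero_of_disjoint_of_add_mem (hCC' : Disjoint C C') (hB : B ≤ C') {b : B} {c : V}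
    (hc : c ∈ C) (h : (b : V) + c ∈ C) : b = 0 := by
  have hbC : (b : V) ∈ C := by simpa using C.sub_mem h hc
  simpa using Submodule.disjoint_def.1 hCC' _ hbC (hB b.2)

variable (hCC' : Disjoint C C') (hA : A ≤ C) (hB : B ≤ C') (hD : D ≤ C)
include hA hD

lemma sup_graphSubspace (φ : B →ₗ[F] D) : C ⊔ graphSubspace A φ = C ⊔ B := by
  refine le_antisymm (sup_le le_sup_left (sup_le (hA.trans le_sup_left) ?_))
    (sup_le le_sup_left fun b hb => ?_)
  · rintro _ ⟨b, rfl⟩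
    exact Submodule.add_mem _ (Submodule.mem_sup_right b.2)
      (Submodule.mem_sup_left (hD (φ b).2))
  · have hgraph : b + φ ⟨b, hb⟩ ∈ graphSubspace A φ :=
      (mem_graphSubspace φ).2 ⟨⟨b, hb⟩, by simp⟩
    simpa using Submodule.sub_mem _ (Submodule.mem_sup_right hgraph)
      (Submodule.mem_sup_left (hD (φ ⟨b, hb⟩).2))

include hCC' hB

lemma graphSubspace_inf (φ : B →ₗ[F] D) : graphSubspace A φ ⊓ C = A := by
  refine le_antisymm (fun x ⟨hxU, hxC⟩ => ?_) (le_inf le_sup_left hA)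
  obtain ⟨b, hb⟩ := (mem_graphSubspace φ).1 hxU
  have hb0 : b = 0 :=
    eq_zero_of_disjoint_of_add_mem hCC' hB (hD (φ b).2) (by simpa using C.sub_mem hxC (hA hb))
  simpa [hb0] using hb

lemma sup_graphSubspace_inf (φ : B →ₗ[F] D) : (C ⊔ graphSubspace A φ) ⊓ C' = B := by
  rw [sup_graphSubspace hA hD, sup_comm, sup_inf_assoc_of_le C hB, hCC'.eq_bot, sup_bot_eq]

lemma finrank_graphSubspace [FiniteDimensional F V] (φ : B →ₗ[F] D) :
    finrank F (graphSubspace A φ) = finrank F A + finrank F B := by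
  have hinj : Function.Injective (B.subtype + D.subtype ∘ₗ φ) := by
    refine (injective_iff_map_eq_zero _).2 fun b hb =>
      eq_zero_of_disjoint_of_add_mem hCC' hB (hD (φ b).2) ?_
    convert C.zero_mem
    simpa using hb
  have hdisj : A ⊓ LinearMap.range (B.subtype + D.subtype ∘ₗ φ) = ⊥ := by
    refine eq_bot_iff.2 fun x ⟨hxA, b, hbx⟩ => ?_
    have hb0 : b = 0 :=
      eq_zero_of_disjoint_of_add_mem hCC' hB (hD (φ b).2) (by simpa [← hbx] using hA hxA)
    simp [← hbx, hb0]
  have := Submodule.finrank_sup_add_finrank_inf_eq A (LinearMap.range (B.subtype + D.subtype ∘ₗ φ))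
  rwa [hdisj, finrank_bot, add_zero, LinearMap.finrank_range_of_inj hinj] at this

lemma graphSubspace_injective (hAD : Disjoint A D) :
    Function.Injective (graphSubspace A : (B →ₗ[F] D) → Submodule F V) := by
  intro φ₁ φ₂ h
  ext b : 1
  obtain ⟨b', hb'⟩ := (mem_graphSubspace φ₂).1
    (h ▸ (mem_graphSubspace φ₁).2 ⟨b, by simp⟩ : (b : V) + φ₁ b ∈ graphSubspace A φ₂)
  have hbb' : b - b' = 0 := eq_zero_of_disjoint_of_add_mem hCC' hB
    (C.sub_mem (hD (φ₁ b).2) (hD (φ₂ b').2)) (by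
      convert hA hb' using 1
      simp only [Submodule.coe_sub]
      abel)
  rw [sub_eq_zero] at hbb'
  subst hbb'
  have hφ : ((φ₁ b - φ₂ b : D) : V) = 0 :=
    Submodule.disjoint_def.1 hAD _ (by simpa [add_sub_add_left_eq_sub] using hb') (φ₁ b - φ₂ b).2
  simpa [sub_eq_zero] using hφ

end GraphSubspace

lemma exists_le_disjoint_sup_eq {α : Type*} [Lattice α] [BoundedOrder α] [IsModularLattice α]
    [ComplementedLattice α] {a c : α} (h : a ≤ c) : ∃ d ≤ c, Disjoint a d ∧ a ⊔ d = c := by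
  obtain ⟨a', ha'⟩ := exists_isCompl a
  refine ⟨a' ⊓ c, inf_le_right, ha'.disjoint.mono_right inf_le_left, ?_⟩
  rw [← sup_inf_assoc_of_le a' h, ha'.sup_eq_top, top_inf_eq]

section Ball

variable {F V : Type*} [Field F] [Fintype F] [AddCommGroup V] [Module F V] [Finite V]

lemma natCard_linearMap (B D : Submodule F V) :
    Nat.card (B →ₗ[F] D) = Fintype.card F ^ (finrank F B * finrank F D) := by
  rw [Module.natCard_eq_pow_finrank (K := F), Module.finrank_linearMap F F,
    Nat.card_eq_fintype_card]

theorem le_natCard_finrank_eq_dI_eq {r d : ℕ} {C : Submodule F V} (hC : finrank F C = r)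
    (hd : d ≤ r) :
    (Fintype.card F : ℝ) ^ (d ^ 2) * gaussBinom (Fintype.card F) r d *
        gaussBinom (Fintype.card F) (finrank F V - r) d
      ≤ Nat.card {U : Submodule F V // finrank F U = r ∧ dI C U = d} := by
  obtain ⟨C', hCC'⟩ := C.exists_isCompl
  have hC' : finrank F C' = finrank F V - r := by
    have := Submodule.finrank_add_eq_of_isCompl hCC'
    omega
  let As := {A : Submodule F V // A ≤ C ∧ finrank F A = r - d}
  let Bs := {B : Submodule F V // B ≤ C' ∧ finrank F B = d}
  choose D hDC hAD hAD_sup using fun A : As => exists_le_disjoint_sup_eq A.2.1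
  have hD : ∀ A, finrank F (D A) = d := fun A => by
    have := Submodule.finrank_sup_add_finrank_inf_eq A.1 (D A)
    rw [hAD_sup, (hAD A).eq_bot, finrank_bot, A.2.2, hC] at this
    omega
  have hsupB : ∀ B : Bs, finrank F ↥(C ⊔ B.1) = r + d := fun B => by
    have := Submodule.finrank_sup_add_finrank_inf_eq C B.1
    rwa [(hCC'.disjoint.mono_right B.2.1).eq_bot, finrank_bot, add_zero, hC, B.2.2] at this
  have hU : ∀ (A : As) (B : Bs) (φ : B.1 →ₗ[F] D A), finrank F (graphSubspace A.1 φ) = r :=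
    fun A B φ => by
      rw [finrank_graphSubspace hCC'.disjoint A.2.1 B.2.1 (hDC A), A.2.2, B.2.2]
      omega
  let Φ : (Σ A : As, Σ B : Bs, B.1 →ₗ[F] D A) →
      {U : Submodule F V // finrank F U = r ∧ dI C U = d} := fun ⟨A, B, φ⟩ =>
    ⟨graphSubspace A.1 φ, hU A B φ, by
      rw [dI, sup_graphSubspace A.2.1 (hDC A), hsupB, hC, hU A B φ]
      omega⟩
  have hΦ : Function.Injective Φ := by
    rintro ⟨A₁, B₁, φ₁⟩ ⟨A₂, B₂, φ₂⟩ h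
    have h : graphSubspace A₁.1 φ₁ = graphSubspace A₂.1 φ₂ := congrArg Subtype.val h
    obtain rfl : A₁ = A₂ := Subtype.ext <| by
      rw [← graphSubspace_inf hCC'.disjoint A₁.2.1 B₁.2.1 (hDC A₁) φ₁, h,
        graphSubspace_inf hCC'.disjoint A₂.2.1 B₂.2.1 (hDC A₂) φ₂]
    obtain rfl : B₁ = B₂ := Subtype.ext <| by
      rw [← sup_graphSubspace_inf hCC'.disjoint A₁.2.1 B₁.2.1 (hDC A₁) φ₁, h,
        sup_graphSubspace_inf hCC'.disjoint A₁.2.1 B₂.2.1 (hDC A₁) φ₂]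
    obtain rfl := graphSubspace_injective hCC'.disjoint A₁.2.1 B₁.2.1 (hDC A₁) (hAD A₁) h
    rfl
  have : ∀ (B D : Submodule F V), Finite (B →ₗ[F] D) := fun _ _ => Module.finite_of_finite F
  have hcard : Nat.card (Σ A : As, Σ B : Bs, B.1 →ₗ[F] D A) =
      Nat.card As * (Nat.card Bs * Fintype.card F ^ (d * d)) :=
    Nat.card_sigma_of_forall_card_eq fun A => Nat.card_sigma_of_forall_card_eq fun B => by
      rw [natCard_linearMap, B.2.2, hD]
  have hAs : (Nat.card As : ℝ) = gaussBinom (Fintype.card F) r d := by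
    rw [natCard_le_and_finrank_eq, hC, gaussBinom_symm Fintype.one_lt_card hd]
  have hBs : (Nat.card Bs : ℝ) = gaussBinom (Fintype.card F) (finrank F V - r) d := by
    rw [natCard_le_and_finrank_eq, hC']
  calc (Fintype.card F : ℝ) ^ (d ^ 2) * gaussBinom (Fintype.card F) r d *
        gaussBinom (Fintype.card F) (finrank F V - r) d
      = Nat.card (Σ A : As, Σ B : Bs, B.1 →ₗ[F] D A) := by
        rw [hcard]
        push_cast
        rw [hAs, hBs]
        ring
    _ ≤ _ := by exact_mod_cast Nat.card_le_card_of_injective Φ hΦ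

theorem ballVol_le_natCard_dI_le {r : ℕ} (ρ : ℕ) {C : Submodule F V} (hC : finrank F C = r) :
    ballVol (Fintype.card F) (finrank F V) r ρ
      ≤ Nat.card {U : Submodule F V // finrank F U = r ∧ dI C U ≤ ρ} := by
  have hterm : ∀ d ∈ range (ρ + 1),
      (Fintype.card F : ℝ) ^ (d ^ 2) * gaussBinom (Fintype.card F) r d *
          gaussBinom (Fintype.card F) (finrank F V - r) d
        ≤ Nat.card {U : Submodule F V // finrank F U = r ∧ dI C U = d} := fun d _ => by
    rcases le_or_gt d r with hd | hd
    · exact le_natCard_finrank_eq_dI_eq hC hd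
    · simp [gaussBinom_eq_zero_of_lt hd]
  let Ψ : (Σ d : Fin (ρ + 1), {U : Submodule F V // finrank F U = r ∧ dI C U = d}) →
      {U : Submodule F V // finrank F U = r ∧ dI C U ≤ ρ} :=
    fun γ => ⟨γ.2.1, γ.2.2.1, γ.2.2.2.trans_le (Nat.lt_succ_iff.1 γ.1.2)⟩
  have hΨ : Function.Injective Ψ := by
    rintro ⟨d₁, U₁, h₁⟩ ⟨d₂, U₂, h₂⟩ h
    obtain rfl : U₁ = U₂ := congrArg Subtype.val h
    obtain rfl := Fin.ext (h₁.2.symm.trans h₂.2)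
    rfl
  calc ballVol (Fintype.card F) (finrank F V) r ρ
      ≤ ∑ d ∈ range (ρ + 1), (Nat.card {U : Submodule F V // finrank F U = r ∧ dI C U = d} : ℝ) :=
        sum_le_sum hterm
    _ = Nat.card (Σ d : Fin (ρ + 1), {U : Submodule F V // finrank F U = r ∧ dI C U = d}) := by
        rw [Nat.card_sigma, Nat.cast_sum,
          Fin.sum_univ_eq_sum_range (fun d => (Nat.card {U : Submodule F V //
            finrank F U = r ∧ dI C U = d} : ℝ))]
    _ ≤ _ := by exact_mod_cast Nat.card_le_card_of_injective Ψ hΨ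

end Ball

theorem exists_forall_exists_of_card_mul_pow_lt {X Y : Type*} [Fintype X] [Fintype Y]
    (R : X → Y → Prop) {v : ℝ} {K : ℕ} (hv : ∀ x, v ≤ Nat.card {y // R x y})
    (h : Fintype.card X * (Fintype.card Y - v) ^ K < (Fintype.card Y : ℝ) ^ K) :
    ∃ ω : Fin K → Y, ∀ x, ∃ i, R x (ω i) := by
  classical
  by_contra! hbad
  have hmiss : ∀ x, (#{y | ¬R x y} : ℝ) ≤ Fintype.card Y - v := fun x => by
    have hsplit := card_filter_add_card_filter_not (s := univ) (R x)
    have hx := hv x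
    rw [Nat.card_eq_fintype_card, Fintype.card_subtype] at hx
    rw [← card_univ, ← hsplit]
    push_cast
    linarith
  have hunion : (univ : Finset (Fin K → Y)) ⊆
      univ.biUnion fun x => Fintype.piFinset fun _ => {y | ¬R x y} := fun ω _ => by
    obtain ⟨x, hx⟩ := hbad ω
    simpa using ⟨x, hx⟩
  have hcount : (Fintype.card Y : ℝ) ^ K ≤ Fintype.card X * (Fintype.card Y - v) ^ K :=
    calc (Fintype.card Y : ℝ) ^ K = #(univ : Finset (Fin K → Y)) := by simp
      _ ≤ ∑ x, #(Fintype.piFinset fun _ : Fin K => {y | ¬R x y}) := by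
        exact_mod_cast (card_le_card hunion).trans card_biUnion_le
      _ = ∑ x, (#{y | ¬R x y} : ℝ) ^ K := by simp [Fintype.card_piFinset]
      _ ≤ ∑ _x : X, (Fintype.card Y - v) ^ K :=
        sum_le_sum fun x _ => pow_le_pow_left₀ (Nat.cast_nonneg _) (hmiss x) K
      _ = Fintype.card X * (Fintype.card Y - v) ^ K := by simp
  linarith

lemma neg_one_div_logb_one_sub_div {Q V : ℝ} (hQ : 1 < Q) (hVQ : V < Q) :
    -1 / Real.logb Q (1 - V / Q) = 1 / (1 - Real.logb Q (Q - V)) := by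
  rw [one_sub_div (by positivity), Real.logb_div (by linarith) (by positivity),
    Real.logb_self_eq_one hQ, ← neg_sub 1, neg_div_neg_eq]

lemma logb_lt_one_of_lt {Q W : ℝ} (hQ : 1 < Q) (hW : 0 < W) (hWQ : W < Q) :
    Real.logb Q W < 1 :=
  Real.logb_self_eq_one hQ ▸ Real.logb_lt_logb hQ hW hWQ

lemma mul_pow_lt_pow_of_one_div_one_sub_logb_lt {Q W : ℝ} (hQ : 1 < Q) (hW : 0 < W)
    (hWQ : W < Q) {K : ℕ} (hK : 1 / (1 - Real.logb Q W) < K) : Q * W ^ K < Q ^ K := by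
  have hK' : 1 < K * (1 - Real.logb Q W) :=
    (div_lt_iff₀ (sub_pos.2 (logb_lt_one_of_lt hQ hW hWQ))).1 hK
  rw [← Real.logb_lt_logb_iff hQ (by positivity) (by positivity),
    Real.logb_mul (by positivity) (by positivity), Real.logb_pow, Real.logb_pow,
    Real.logb_self_eq_one hQ]
  linarith

theorem exists_covering_code {F V : Type*} [Field F] [Fintype F] [AddCommGroup V] [Module F V]
    [Finite V] {n : ℕ} (hn : finrank F V = n) {r ρ K : ℕ}
    (hK : gaussBinom (Fintype.card F) n r *
        (gaussBinom (Fintype.card F) n r - ballVol (Fintype.card F) n r ρ) ^ K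
      < gaussBinom (Fintype.card F) n r ^ K) :
    ∃ 𝒞 : Finset (Submodule F V), (∀ C ∈ 𝒞, finrank F C = r) ∧
      (∀ U : Submodule F V, finrank F U = r → ∃ C ∈ 𝒞, dI U C ≤ ρ) ∧ 𝒞.card ≤ K := by
  classical
  subst hn
  let G := {U : Submodule F V // finrank F U = r}
  let _ : Fintype G := Fintype.ofFinite G
  have hG : (Fintype.card G : ℝ) = gaussBinom (Fintype.card F) (finrank F V) r := by
    rw [← Nat.card_eq_fintype_card]
    exact natCard_finrank_eq r
  have hball : ∀ U : G, ballVol (Fintype.card F) (finrank F V) r ρ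
      ≤ Nat.card {C : G // dI U.1 C.1 ≤ ρ} := fun U => by
    rw [Nat.card_congr (Equiv.subtypeSubtypeEquivSubtypeInter
      (fun W : Submodule F V => finrank F W = r) fun W => dI U.1 W ≤ ρ)]
    exact ballVol_le_natCard_dI_le ρ U.2
  obtain ⟨ω, hω⟩ := exists_forall_exists_of_card_mul_pow_lt _ hball (by rwa [hG])
  refine ⟨univ.image fun i => (ω i).1, ?_, fun U hU => ?_, card_image_le.trans (by simp)⟩
  · simp only [mem_image, mem_univ, true_and]
    rintro _ ⟨i, rfl⟩
    exact (ω i).2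
  · obtain ⟨i, hi⟩ := hω ⟨U, hU⟩
    exact ⟨_, mem_image_of_mem _ (mem_univ i), hi⟩

theorem probabilistic_covering_bound_general (q n r ρ : ℕ) (F : Type*) [Field F] [Fintype F]
    (hq : Fintype.card F = q)
    (hV : ballVol q n r ρ < gaussBinom q n r) :
    (∃ 𝒞 : Finset (Submodule F (Fin n → F)),
      (∀ C ∈ 𝒞, Module.finrank F ↥C = r) ∧
      (∀ U : Submodule F (Fin n → F), Module.finrank F ↥U = r → ∃ C ∈ 𝒞, dI U C ≤ ρ) ∧
      (𝒞.card : ℝ) ≤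
        ⌊(-1 : ℝ) / Real.logb (gaussBinom q n r)
            (1 - ballVol q n r ρ / gaussBinom q n r)⌋ + 1) ∧
    (KC F n r ρ : ℝ) ≤
      1 / (1 - Real.logb (gaussBinom q n r) (gaussBinom q n r - ballVol q n r ρ)) + 1 := by
  subst hq
  set Q := gaussBinom (Fintype.card F) n r
  set V := ballVol (Fintype.card F) n r ρ
  have hV1 : 1 ≤ V := one_le_ballVol Fintype.one_lt_card n r ρ
  have hQ : 1 < Q := hV1.trans_lt hV
  rw [neg_one_div_logb_one_sub_div hQ hV]
  set x := 1 / (1 - Real.logb Q (Q - V))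
  have hx : 0 ≤ x :=
    one_div_nonneg.2 (sub_nonneg.2 (logb_lt_one_of_lt hQ (by linarith) (by linarith)).le)
  obtain ⟨𝒞, hdim, hcov, hcard⟩ := exists_covering_code (finrank_fin_fun F) (K := ⌊x⌋₊ + 1)
    (mul_pow_lt_pow_of_one_div_one_sub_logb_lt hQ (by linarith) (by linarith)
      (by exact_mod_cast Nat.lt_floor_add_one x))
  have hcard' : (𝒞.card : ℝ) ≤ ⌊x⌋ + 1 := by
    rw [← Int.natCast_floor_eq_floor hx]
    exact_mod_cast hcard
  have hKC : KC F n r ρ ≤ 𝒞.card := Nat.sInf_le ⟨𝒞, hdim, hcov, rfl⟩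
  refine ⟨⟨𝒞, hdim, hcov, hcard'⟩, ?_⟩
  calc (KC F n r ρ : ℝ) ≤ 𝒞.card := by exact_mod_cast hKC
    _ ≤ ⌊x⌋ + 1 := hcard'
    _ ≤ x + 1 := by linarith [Int.floor_le x]

/-- Probabilistic upper bound on covering constant-dimension codes. -/
theorem probabilistic_covering_bound (q n r ρ : ℕ) (F : Type*) [Field F] [Fintype F]
    (hq : Fintype.card F = q) (hr : r ≤ n) (hρ : 0 < ρ) (hρr : ρ < r)
    (hV : ballVol q n r ρ < gaussBinom q n r) :
    (∃ 𝒞 : Finset (Submodule F (Fin n → F)),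
      (∀ C ∈ 𝒞, Module.finrank F ↥C = r) ∧
      (∀ U : Submodule F (Fin n → F), Module.finrank F ↥U = r → ∃ C ∈ 𝒞, dI U C ≤ ρ) ∧
      (𝒞.card : ℝ) ≤
        ⌊(-1 : ℝ) / Real.logb (gaussBinom q n r)
            (1 - ballVol q n r ρ / gaussBinom q n r)⌋ + 1) ∧
    (KC F n r ρ : ℝ) ≤
      1 / (1 - Real.logb (gaussBinom q n r) (gaussBinom q n r - ballVol q n r ρ)) + 1 :=
  probabilistic_covering_bound_general q n r ρ F hq hV
end
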